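/- Restricted empirical measure approximation: under the same setup, assume additionally α₀ ≠ 0 and ε < α₀/2, and R > max{R_{Z̄}(ε), R_{μ₀}(ε)}. For any trajectory w of length n starting at 0 with ‖ℓ(w) − μ‖ < 2^{−R}ε, the normalized restriction of the empirical measure to the central region, ℓ⁰(w) = (1/N⁰(w)) ∑_{j : w_j ∈ A⁰} δ_{w_j}, satisfies ‖ℓ⁰(w) − μ₀‖ < 6ε/α₀. -/

import Mathlib

open MeasureTheory

/-- The two-point compactification `Z̄ = ℤ ∪ {−∞, +∞}` of `ℤ`:
`Sum.inl n` is the integer `n`, `Sum.inr false` is `−∞`, `Sum.inr true` is `+∞`. -/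
abbrev Zbar : Type := ℤ ⊕ Bool

/-- The map `φ : Z̄ → [-1,1]`, `φ(k) = sign(k)(1 − 2^{−|k|})`, `φ(±∞) = ±1`. -/
noncomputable def phi : Zbar → ℝ
  | Sum.inr false => -1
  | Sum.inr true => 1
  | Sum.inl n => if 0 ≤ n then 1 - (2 : ℝ) ^ (-n) else -1 + (2 : ℝ) ^ n

/-- Kantorovich–Rubinstein distance between the empirical measure of a trajectory `w`
and the measure `μ = α₋ δ_{−∞} + α₀ μ₀ + α₊ δ_{+∞} ∈ P(Z̄)`. -/
noncomputable def krDistEmp (n : ℕ) (w : ℕ → ℤ)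
    (am a0 ap : ℝ) (μ₀ : Measure ℤ) : ℝ :=
  sSup {r : ℝ | ∃ f : Zbar → ℝ,
    (∀ a b : Zbar, |f a - f b| ≤ |phi a - phi b|) ∧ (∀ a, |f a| ≤ 1) ∧
    r = (1 / (n : ℝ)) * ∑ j ∈ Finset.Icc 1 n, f (Sum.inl (w j))
          - (am * f (Sum.inr false) + a0 * ∫ z, f (Sum.inl z) ∂μ₀
              + ap * f (Sum.inr true))}

/-- `R_{μ₀}(ε) = min {R ∈ ℕ : μ₀(⟦−R+1, R−1⟧) > 1 − ε}`. -/
noncomputable def Rmu (μ₀ : Measure ℤ) (ε : ℝ) : ℕ :=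
  sInf {R : ℕ | ENNReal.ofReal (1 - ε) < μ₀ {z : ℤ | -(R : ℤ) + 1 ≤ z ∧ z ≤ (R : ℤ) - 1}}

/-- `R_{Z̄}(ε) = ⌈log₂(1/ε)⌉ + 1`. -/
noncomputable def RZbar (ε : ℝ) : ℕ := ⌈Real.logb 2 (1 / ε)⌉₊ + 1

/-!
Split `ℤ` into the zones `A⁻ = {z ≤ -R}`, `A⁰ = {|z| < R}`, `A⁺ = {z ≥ R}`. Functions constant on
each zone are, after scaling by `2^(-R)`, admissible in the Kantorovich–Rubinstein supremum,
because `phi` separates the zones by at least `2^(-R)`. Testing the hypothesis against them gives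
the occupation-time estimates: the fraction of time the trajectory spends in each zone is within
`ε` of the `μ`-mass of that zone. A general test function `f` is within `2^(-R)` of `f(∓∞)` on
`A∓`, so the bound for `f` transfers to `(1/n) ∑_{w_j ∈ A⁰} f(w_j) ≈ α₀ ∫ f dμ₀`; dividing by
`N⁰/n ≈ α₀` costs the factor `1/α₀`.
-/

open scoped Finset

local notation "A⁻" R:max => Set.Iic (-(R : ℤ))
local notation "A⁰" R:max => Set.Icc (-(R : ℤ) + 1) ((R : ℤ) - 1)
local notation "A⁺" R:max => Set.Ici (R : ℤ)

lemma phi_inl_of_neg {z : ℤ} (hz : z < 0) : phi (.inl z) = -1 + 2 ^ z := by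
  simp [phi, not_le.2 hz]

lemma phi_inl_of_nonneg {z : ℤ} (hz : 0 ≤ z) : phi (.inl z) = 1 - 2 ^ (-z) := by
  simp [phi, hz]

lemma phi_inl_neg_natCast (k : ℕ) : phi (.inl (-k)) = -1 + 2 ^ (-(k : ℤ)) := by
  rcases k.eq_zero_or_pos with rfl | hk
  · norm_num [phi]
  · exact phi_inl_of_neg (by omega)

lemma phi_inl_natCast (k : ℕ) : phi (.inl k) = 1 - 2 ^ (-(k : ℤ)) :=
  phi_inl_of_nonneg k.cast_nonneg

lemma monotone_phi_inl : Monotone fun z : ℤ => phi (.inl z) := by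
  intro z z' h
  show phi _ ≤ phi _
  have h2 : (1 : ℝ) ≤ 2 := one_le_two
  rcases lt_or_ge z 0 with hz | hz <;> rcases lt_or_ge z' 0 with hz' | hz'
  · simpa [phi_inl_of_neg hz, phi_inl_of_neg hz'] using zpow_le_zpow_right₀ h2 h
  · rw [phi_inl_of_neg hz, phi_inl_of_nonneg hz']
    linarith [zpow_le_one_of_nonpos₀ h2 hz.le, zpow_le_one_of_nonpos₀ h2 (neg_nonpos.2 hz')]
  · omega
  · rw [phi_inl_of_nonneg hz, phi_inl_of_nonneg hz']
    linarith [zpow_le_zpow_right₀ h2 (neg_le_neg h)]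

lemma neg_one_le_phi (a : Zbar) : -1 ≤ phi a := by
  rcases a with z | _ | _
  · rcases lt_or_ge z 0 with hz | hz
    · rw [phi_inl_of_neg hz]; linarith [zpow_pos (two_pos : (0 : ℝ) < 2) z]
    · rw [phi_inl_of_nonneg hz]
      linarith [zpow_le_one_of_nonpos₀ (one_le_two : (1 : ℝ) ≤ 2) (neg_nonpos.2 hz)]
  · norm_num [phi]
  · norm_num [phi]

lemma phi_le_one (a : Zbar) : phi a ≤ 1 := by
  rcases a with z | _ | _
  · rcases lt_or_ge z 0 with hz | hz
    · rw [phi_inl_of_neg hz]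
      linarith [zpow_le_one_of_nonpos₀ (one_le_two : (1 : ℝ) ≤ 2) hz.le]
    · rw [phi_inl_of_nonneg hz]; linarith [zpow_pos (two_pos : (0 : ℝ) < 2) (-z)]
  · norm_num [phi]
  · norm_num [phi]

lemma phi_inl_le_of_le_neg {R : ℕ} {z : ℤ} (hz : z ≤ -R) :
    phi (.inl z) ≤ -1 + 2 ^ (-(R : ℤ)) :=
  phi_inl_neg_natCast R ▸ monotone_phi_inl hz

lemma le_phi_inl_of_le {R : ℕ} {z : ℤ} (hz : R ≤ z) :
    1 - 2 ^ (-(R : ℤ)) ≤ phi (.inl z) :=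
  phi_inl_natCast R ▸ monotone_phi_inl hz

lemma phi_inl_mem_Icc_of_mem_Icc {R : ℕ} {z : ℤ} (hz : z ∈ A⁰ R) :
    phi (.inl z) ∈ Set.Icc (-1 + 2 * 2 ^ (-(R : ℤ))) (1 - 2 * 2 ^ (-(R : ℤ))) := by
  obtain ⟨k, rfl⟩ : ∃ k, R = k + 1 := ⟨R - 1, by grind⟩
  have hk : (2 : ℝ) * 2 ^ (-((k + 1 : ℕ) : ℤ)) = 2 ^ (-(k : ℤ)) := by
    rw [Nat.cast_succ, neg_add, zpow_add₀ two_ne_zero]; ring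
  obtain ⟨hlo, hhi⟩ := hz
  push_cast at hlo hhi
  rw [hk, ← phi_inl_neg_natCast, ← phi_inl_natCast]
  exact ⟨monotone_phi_inl (by omega), monotone_phi_inl (by omega)⟩

lemma abs_phi_inl_sub_phi_bot_le {R : ℕ} {z : ℤ} (hz : z ≤ -R) :
    |phi (.inl z) - phi (.inr false)| ≤ 2 ^ (-(R : ℤ)) := by
  rw [abs_le]
  constructor <;> linarith [phi_inl_le_of_le_neg hz, neg_one_le_phi (.inl z),
    show phi (.inr false) = -1 from rfl, zpow_pos (two_pos : (0 : ℝ) < 2) (-(R : ℤ))]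

lemma abs_phi_inl_sub_phi_top_le {R : ℕ} {z : ℤ} (hz : R ≤ z) :
    |phi (.inl z) - phi (.inr true)| ≤ 2 ^ (-(R : ℤ)) := by
  rw [abs_le]
  constructor <;> linarith [le_phi_inl_of_le hz, phi_le_one (.inl z),
    show phi (.inr true) = 1 from rfl, zpow_pos (two_pos : (0 : ℝ) < 2) (-(R : ℤ))]

def IsKRTest (f : Zbar → ℝ) : Prop :=
  (∀ a b : Zbar, |f a - f b| ≤ |phi a - phi b|) ∧ ∀ a, |f a| ≤ 1

def zoneStep (R : ℕ) (lo mid hi : ℝ) : Zbar → ℝ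
  | .inl z => if z ≤ -(R : ℤ) then lo else if z ≤ (R : ℤ) - 1 then mid else hi
  | .inr false => lo
  | .inr true => hi

section zoneStep

variable {R : ℕ} {lo mid hi : ℝ}

lemma zoneStep_cases (a : Zbar) :
    (zoneStep R lo mid hi a = lo ∧ phi a ≤ -1 + 2 ^ (-(R : ℤ))) ∨
    (zoneStep R lo mid hi a = mid ∧
      phi a ∈ Set.Icc (-1 + 2 * 2 ^ (-(R : ℤ))) (1 - 2 * 2 ^ (-(R : ℤ)))) ∨
    (zoneStep R lo mid hi a = hi ∧ 1 - 2 ^ (-(R : ℤ)) ≤ phi a) := by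
  rcases a with z | _ | _
  · simp only [zoneStep]
    split_ifs with hlo hmid
    · exact .inl ⟨rfl, phi_inl_le_of_le_neg hlo⟩
    · exact .inr (.inl ⟨rfl, phi_inl_mem_Icc_of_mem_Icc ⟨by omega, hmid⟩⟩)
    · exact .inr (.inr ⟨rfl, le_phi_inl_of_le (by omega)⟩)
  · exact .inl ⟨rfl, by norm_num [phi]⟩
  · exact .inr (.inr ⟨rfl, by norm_num [phi]⟩)

/-- `phi` separates adjacent zones by `2 ^ (-R)` and the two outer zones by `2 ^ (-R + 1)`. -/
lemma two_zpow_mul_abs_zoneStep_sub_le (hR : 1 ≤ R) (hlm : |lo - mid| ≤ 1)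
    (hmh : |mid - hi| ≤ 1) (hlh : |lo - hi| ≤ 2) (a b : Zbar) :
    2 ^ (-(R : ℤ)) * |zoneStep R lo mid hi a - zoneStep R lo mid hi b| ≤ |phi a - phi b| := by
  have hP : (0 : ℝ) < 2 ^ (-(R : ℤ)) := by positivity
  have hP2 : (2 : ℝ) ^ (-(R : ℤ)) ≤ 1 / 2 := by
    simpa using zpow_le_zpow_right₀ (one_le_two : (1 : ℝ) ≤ 2) (by omega : -(R : ℤ) ≤ -1)
  have step : ∀ {c d k : ℝ} (s t : ℝ), |c - d| ≤ k → 2 ^ (-(R : ℤ)) * k ≤ |s - t| →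
      2 ^ (-(R : ℤ)) * |c - d| ≤ |s - t| :=
    fun _ _ h h' => (mul_le_mul_of_nonneg_left h hP.le).trans h'
  have hml := abs_sub_comm lo mid ▸ hlm
  have hhm := abs_sub_comm mid hi ▸ hmh
  have hhl := abs_sub_comm lo hi ▸ hlh
  rcases zoneStep_cases (lo := lo) (mid := mid) (hi := hi) a with
    ⟨ha, ha'⟩ | ⟨ha, ha', ha''⟩ | ⟨ha, ha'⟩ <;>
  rcases zoneStep_cases (lo := lo) (mid := mid) (hi := hi) b with
    ⟨hb, hb'⟩ | ⟨hb, hb', hb''⟩ | ⟨hb, hb'⟩ <;>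
  rw [ha, hb] <;>
  first
  | (rw [sub_self, abs_zero, mul_zero]; exact abs_nonneg _)
  | exact step _ _ (by assumption) (by linarith [neg_le_abs (phi a - phi b)])
  | exact step _ _ (by assumption) (by linarith [le_abs_self (phi a - phi b)])

lemma zoneStep_inl_of_le {z : ℤ} (hz : z ≤ -R) : zoneStep R lo mid hi (.inl z) = lo :=
  if_pos hz

lemma zoneStep_inl_of_mem_Icc {z : ℤ} (hz : z ∈ A⁰ R) : zoneStep R lo mid hi (.inl z) = mid := by
  simp only [zoneStep, if_neg (show ¬z ≤ -R by linarith [hz.1]), if_pos hz.2]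

lemma zoneStep_inl_of_ge (hR : 1 ≤ R) {z : ℤ} (hz : R ≤ z) :
    zoneStep R lo mid hi (.inl z) = hi := by
  simp only [zoneStep, if_neg (show ¬z ≤ -R by omega), if_neg (show ¬z ≤ R - 1 by omega)]

lemma isKRTest_zoneTest (hR : 1 ≤ R) (hlo : |lo| ≤ 1) (hmid : |mid| ≤ 1) (hhi : |hi| ≤ 1)
    (hlm : |lo - mid| ≤ 1) (hmh : |mid - hi| ≤ 1) :
    IsKRTest fun a => 2 ^ (-(R : ℤ)) * zoneStep R lo mid hi a := by
  have hP : (0 : ℝ) < 2 ^ (-(R : ℤ)) := by positivity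
  have hP1 : (2 : ℝ) ^ (-(R : ℤ)) ≤ 1 := zpow_le_one_of_nonpos₀ one_le_two (by omega)
  refine ⟨fun a b => ?_, fun a => ?_⟩
  · rw [← mul_sub, abs_mul, abs_of_pos hP]
    exact two_zpow_mul_abs_zoneStep_sub_le hR hlm hmh ((abs_sub _ _).trans (by linarith)) a b
  · have ha : |zoneStep R lo mid hi a| ≤ 1 := by
      rcases zoneStep_cases (lo := lo) (mid := mid) (hi := hi) a with
        ⟨h, -⟩ | ⟨h, -⟩ | ⟨h, -⟩ <;> rw [h] <;> assumption
    rw [abs_mul, abs_of_pos hP]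
    exact mul_le_one₀ hP1 (abs_nonneg _) ha

lemma integral_zoneStep_inl (μ : Measure ℤ) [IsFiniteMeasure μ] (hR : 1 ≤ R) :
    ∫ z, zoneStep R lo mid hi (.inl z) ∂μ =
      μ.real (A⁻ R) * lo + μ.real (A⁰ R) * mid + μ.real (A⁺ R) * hi := by
  have hsplit : (fun z => zoneStep R lo mid hi (.inl z)) = fun z =>
      (A⁻ R).indicator (fun _ => lo) z + (A⁰ R).indicator (fun _ => mid) z +
        (A⁺ R).indicator (fun _ => hi) z := by
    ext z
    simp only [zoneStep, Set.indicator_apply, Set.mem_Iic, Set.mem_Icc, Set.mem_Ici]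
    split_ifs <;> first | (exfalso; omega) | ring
  have hint (s : Set ℤ) (c : ℝ) : Integrable (s.indicator fun _ => c) μ :=
    (integrable_const c).indicator (.of_discrete)
  rw [hsplit, integral_add _ (hint _ hi), integral_add (hint _ lo) (hint _ mid)]
  · simp only [integral_indicator_const _ (.of_discrete), smul_eq_mul]
  · exact (hint _ lo).add (hint _ mid)

lemma measureReal_Iic_add_Icc_add_Ici (μ : Measure ℤ) [IsProbabilityMeasure μ] (hR : 1 ≤ R) :
    μ.real (A⁻ R) + μ.real (A⁰ R) + μ.real (A⁺ R) = 1 := by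
  have h := integral_zoneStep_inl (lo := 1) (mid := 1) (hi := 1) μ hR
  simp only [zoneStep, ite_self, integral_const, probReal_univ, smul_eq_mul, mul_one] at h
  exact h.symm

end zoneStep

def visits (n : ℕ) (w : ℕ → ℤ) (A : Set ℤ) [DecidablePred (· ∈ A)] : Finset ℕ :=
  {j ∈ Finset.Icc 1 n | w j ∈ A}

section visits

variable {n : ℕ} {w : ℕ → ℤ} {R : ℕ}

lemma mem_visits {A : Set ℤ} [DecidablePred (· ∈ A)] {j : ℕ} :
    j ∈ visits n w A ↔ j ∈ Finset.Icc 1 n ∧ w j ∈ A :=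
  Finset.mem_filter

lemma sum_visits_eq_card_smul {M : Type*} [AddCommMonoid M] (A : Set ℤ) [DecidablePred (· ∈ A)]
    {F : ℕ → M} {c : M} (h : ∀ j, w j ∈ A → F j = c) :
    ∑ j ∈ visits n w A, F j = #(visits n w A) • c :=
  Finset.sum_eq_card_nsmul fun j hj => h j (mem_visits.1 hj).2

lemma sum_Icc_eq_sum_visits_add {M : Type*} [AddCommMonoid M] (hR : 1 ≤ R) (F : ℕ → M) :
    ∑ j ∈ Finset.Icc 1 n, F j =
      ∑ j ∈ visits n w (A⁻ R), F j + ∑ j ∈ visits n w (A⁰ R), F j +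
        ∑ j ∈ visits n w (A⁺ R), F j := by
  have hmid : {j ∈ Finset.Icc 1 n | w j ∉ A⁻ R ∧ w j ≤ R - 1} = visits n w (A⁰ R) :=
    Finset.filter_congr fun j _ => by simp only [Set.mem_Iic, Set.mem_Icc]; omega
  have hhigh : {j ∈ Finset.Icc 1 n | w j ∉ A⁻ R ∧ ¬w j ≤ R - 1} = visits n w (A⁺ R) :=
    Finset.filter_congr fun j _ => by simp only [Set.mem_Iic, Set.mem_Ici]; omega
  rw [← Finset.sum_filter_add_sum_filter_not (Finset.Icc 1 n) (fun j => w j ∈ A⁻ R),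
    ← Finset.sum_filter_add_sum_filter_not {j ∈ Finset.Icc 1 n | w j ∉ A⁻ R}
      (fun j => w j ≤ R - 1), Finset.filter_filter, Finset.filter_filter, hmid, hhigh, ← add_assoc]
  rfl

lemma card_visits_add (hR : 1 ≤ R) :
    (#(visits n w (A⁻ R)) : ℝ) + #(visits n w (A⁰ R)) + #(visits n w (A⁺ R)) = n := by
  simpa using (sum_Icc_eq_sum_visits_add (n := n) (w := w) hR (fun _ => (1 : ℝ))).symm

end visits

noncomputable def krGap (n : ℕ) (w : ℕ → ℤ) (am a0 ap : ℝ) (μ₀ : Measure ℤ) (f : Zbar → ℝ) : ℝ :=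
  (1 / (n : ℝ)) * ∑ j ∈ Finset.Icc 1 n, f (.inl (w j))
    - (am * f (.inr false) + a0 * ∫ z, f (.inl z) ∂μ₀ + ap * f (.inr true))

section krGap

variable {n : ℕ} {w : ℕ → ℤ} {am a0 ap : ℝ} {μ₀ : Measure ℤ} [IsProbabilityMeasure μ₀]
  {f : Zbar → ℝ}

lemma krGap_le (hf : IsKRTest f) : krGap n w am a0 ap μ₀ f ≤ 1 + |am| + |a0| + |ap| := by
  have hmean : (1 / (n : ℝ)) * ∑ j ∈ Finset.Icc 1 n, f (.inl (w j)) ≤ 1 := by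
    have hsum : ∑ j ∈ Finset.Icc 1 n, f (.inl (w j)) ≤ n := by
      simpa using Finset.sum_le_card_nsmul (Finset.Icc 1 n) (fun j => f (.inl (w j))) 1
        fun j _ => (abs_le.1 (hf.2 _)).2
    calc (1 / (n : ℝ)) * ∑ j ∈ Finset.Icc 1 n, f (.inl (w j)) ≤ (1 / n) * n := by gcongr
      _ ≤ 1 := by rw [one_div_mul_eq_div]; exact div_self_le_one _
  have hint : |∫ z, f (.inl z) ∂μ₀| ≤ 1 := by
    simpa using norm_integral_le_of_norm_le_const (μ := μ₀)
      (ae_of_all _ fun z => (Real.norm_eq_abs _).trans_le (hf.2 (.inl z)))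
  have hterm (c x : ℝ) (hx : |x| ≤ 1) : -|c| ≤ c * x := by
    have := abs_mul c x ▸ neg_abs_le (c * x)
    nlinarith [abs_nonneg c]
  unfold krGap
  linarith [hterm am _ (hf.2 (.inr false)), hterm a0 _ hint, hterm ap _ (hf.2 (.inr true))]

lemma krGap_lt_of_krDistEmp_lt {c : ℝ} (hd : krDistEmp n w am a0 ap μ₀ < c) (hf : IsKRTest f) :
    krGap n w am a0 ap μ₀ f < c := by
  refine lt_of_le_of_lt ?_ hd
  apply le_csSup
  · refine ⟨1 + |am| + |a0| + |ap|, ?_⟩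
    rintro _ ⟨g, hg, hg', rfl⟩
    exact krGap_le ⟨hg, hg'⟩
  · exact ⟨f, hf.1, hf.2, rfl⟩

end krGap

section occupation

variable {n : ℕ} {w : ℕ → ℤ} {am a0 ap : ℝ} {μ₀ : Measure ℤ} [IsFiniteMeasure μ₀]
  {R : ℕ} {lo mid hi : ℝ}

lemma krGap_zoneTest (hR : 1 ≤ R) :
    krGap n w am a0 ap μ₀ (fun a => 2 ^ (-(R : ℤ)) * zoneStep R lo mid hi a) =
      2 ^ (-(R : ℤ)) *
        (lo * (#(visits n w (A⁻ R)) / n - (am + a0 * μ₀.real (A⁻ R)))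
        + mid * (#(visits n w (A⁰ R)) / n - a0 * μ₀.real (A⁰ R))
        + hi * (#(visits n w (A⁺ R)) / n - (ap + a0 * μ₀.real (A⁺ R)))) := by
  have hsum : ∑ j ∈ Finset.Icc 1 n, zoneStep R lo mid hi (.inl (w j)) =
      #(visits n w (A⁻ R)) * lo + #(visits n w (A⁰ R)) * mid + #(visits n w (A⁺ R)) * hi := by
    rw [sum_Icc_eq_sum_visits_add (w := w) hR,
      sum_visits_eq_card_smul (A⁻ R) fun _ hj => zoneStep_inl_of_le hj,
      sum_visits_eq_card_smul (A⁰ R) fun _ hj => zoneStep_inl_of_mem_Icc hj,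
      sum_visits_eq_card_smul (A⁺ R) fun _ hj => zoneStep_inl_of_ge hR hj]
    simp only [nsmul_eq_mul]
  simp only [krGap, ← Finset.mul_sum, integral_const_mul, hsum, integral_zoneStep_inl μ₀ hR]
  simp only [zoneStep]
  ring

theorem occupation_estimate {ε : ℝ} (hR : 1 ≤ R)
    (hgap : ∀ f, IsKRTest f → krGap n w am a0 ap μ₀ f < 2 ^ (-(R : ℤ)) * ε)
    (hlo : |lo| ≤ 1) (hmid : |mid| ≤ 1) (hhi : |hi| ≤ 1) (hlm : |lo - mid| ≤ 1)
    (hmh : |mid - hi| ≤ 1) :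
    lo * (#(visits n w (A⁻ R)) / n - (am + a0 * μ₀.real (A⁻ R)))
      + mid * (#(visits n w (A⁰ R)) / n - a0 * μ₀.real (A⁰ R))
      + hi * (#(visits n w (A⁺ R)) / n - (ap + a0 * μ₀.real (A⁺ R))) < ε := by
  have h := hgap _ (isKRTest_zoneTest hR hlo hmid hhi hlm hmh)
  rw [krGap_zoneTest hR] at h
  exact lt_of_mul_lt_mul_left h (by positivity)

end occupation

lemma two_zpow_neg_le_of_RZbar_lt {ε : ℝ} (hε : 0 < ε) {R : ℕ} (hR : RZbar ε < R) :
    (2 : ℝ) ^ (-(R : ℤ)) ≤ ε / 4 := by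
  set k := ⌈Real.logb 2 (1 / ε)⌉₊
  have hk : 1 / ε ≤ 2 ^ k := by
    rw [← Real.rpow_natCast]
    exact (Real.logb_le_iff_le_rpow one_lt_two (by positivity)).1 (Nat.le_ceil _)
  have hkR : k + 2 ≤ R := by unfold RZbar at hR; omega
  rw [zpow_neg, zpow_natCast, inv_le_comm₀ (by positivity) (by positivity)]
  calc (ε / 4)⁻¹ = 4 * (1 / ε) := by field_simp
    _ ≤ 4 * 2 ^ k := by gcongr
    _ = 2 ^ (k + 2) := by ring
    _ ≤ 2 ^ R := pow_le_pow_right₀ one_le_two hkR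

section Rmu

variable (μ₀ : Measure ℤ) [IsProbabilityMeasure μ₀] {ε : ℝ}

lemma Rmu_spec (hε : 0 < ε) :
    ENNReal.ofReal (1 - ε) < μ₀ (A⁰ (Rmu μ₀ ε)) := by
  have hmono : Monotone fun R : ℕ => A⁰ R :=
    fun i j hij => Set.Icc_subset_Icc (by omega) (by omega)
  have hcover : ⋃ R : ℕ, A⁰ R = Set.univ :=
    Set.eq_univ_of_forall fun z =>
      Set.mem_iUnion.2 ⟨z.natAbs + 1, by simp only [Set.mem_Icc]; omega⟩
  have hlim : ENNReal.ofReal (1 - ε) < ⨆ R : ℕ, μ₀ (A⁰ R) := by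
    rw [← hmono.measure_iUnion, hcover, measure_univ]
    exact ENNReal.ofReal_lt_one.2 (by linarith)
  exact Nat.sInf_mem (lt_iSup_iff.1 hlim)

lemma one_sub_lt_measureReal_Icc (hε : 0 < ε) {R : ℕ} (hR : Rmu μ₀ ε ≤ R) :
    1 - ε < μ₀.real (A⁰ R) := by
  have hsub : A⁰ (Rmu μ₀ ε) ⊆ A⁰ R :=
    Set.Icc_subset_Icc (by omega) (by omega)
  have hlt := (Rmu_spec μ₀ hε).trans_le (measure_mono hsub)
  rcases le_or_gt ε 1 with h | h
  · exact (ENNReal.ofReal_lt_iff_lt_toReal (by linarith) (measure_ne_top _ _)).1 hlt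
  · linarith [measureReal_nonneg (μ := μ₀) (s := A⁰ R)]

end Rmu

section restricted

variable {n : ℕ} {w : ℕ → ℤ} {am a0 ap : ℝ} {μ₀ : Measure ℤ} [IsProbabilityMeasure μ₀]
  {R : ℕ} {ε : ℝ} {f : Zbar → ℝ}

lemma IsKRTest.apply_bot_sub_le (hf : IsKRTest f) {z : ℤ} (hz : z ≤ -R) :
    f (.inr false) - 2 ^ (-(R : ℤ)) ≤ f (.inl z) := by
  linarith [abs_le.1 ((hf.1 _ _).trans (abs_phi_inl_sub_phi_bot_le hz))]

lemma IsKRTest.apply_top_sub_le (hf : IsKRTest f) {z : ℤ} (hz : R ≤ z) :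
    f (.inr true) - 2 ^ (-(R : ℤ)) ≤ f (.inl z) := by
  linarith [abs_le.1 ((hf.1 _ _).trans (abs_phi_inl_sub_phi_top_le hz))]

lemma IsKRTest.sum_visits_Icc_le (hf : IsKRTest f) (hR : 1 ≤ R) :
    ∑ j ∈ visits n w (A⁰ R), f (.inl (w j)) ≤
      ∑ j ∈ Finset.Icc 1 n, f (.inl (w j))
        - #(visits n w (A⁻ R)) * (f (.inr false) - 2 ^ (-(R : ℤ)))
        - #(visits n w (A⁺ R)) * (f (.inr true) - 2 ^ (-(R : ℤ))) := by
  have hlow : #(visits n w (A⁻ R)) • (f (.inr false) - 2 ^ (-(R : ℤ))) ≤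
      ∑ j ∈ visits n w (A⁻ R), f (.inl (w j)) :=
    Finset.card_nsmul_le_sum _ _ _ fun j hj => hf.apply_bot_sub_le (mem_visits.1 hj).2
  have hhigh : #(visits n w (A⁺ R)) • (f (.inr true) - 2 ^ (-(R : ℤ))) ≤
      ∑ j ∈ visits n w (A⁺ R), f (.inl (w j)) :=
    Finset.card_nsmul_le_sum _ _ _ fun j hj => hf.apply_top_sub_le (mem_visits.1 hj).2
  rw [nsmul_eq_mul] at hlow hhigh
  linarith [sum_Icc_eq_sum_visits_add (n := n) (w := w) hR fun j => f (.inl (w j))]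

lemma abs_card_visits_Icc_div_sub_lt (hR : 1 ≤ R)
    (hgap : ∀ f, IsKRTest f → krGap n w am a0 ap μ₀ f < 2 ^ (-(R : ℤ)) * ε)
    (hp : 1 - ε < μ₀.real (A⁰ R)) (ha0 : 0 ≤ a0) (ha0' : a0 ≤ 1) :
    |#(visits n w (A⁰ R)) / (n : ℝ) - a0| < 2 * ε := by
  have hup := occupation_estimate (lo := 0) (mid := 1) (hi := 0) hR hgap
    (by norm_num) (by norm_num) (by norm_num) (by norm_num) (by norm_num)
  have hdown := occupation_estimate (lo := 0) (mid := -1) (hi := 0) hR hgap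
    (by norm_num) (by norm_num) (by norm_num) (by norm_num) (by norm_num)
  have hp1 : μ₀.real (A⁰ R) ≤ 1 := measureReal_le_one
  have hdefect : a0 * (1 - μ₀.real (A⁰ R)) ≤
      1 - μ₀.real (A⁰ R) :=
    mul_le_of_le_one_left (by linarith) ha0'
  have hdefect' : 0 ≤ a0 * (1 - μ₀.real (A⁰ R)) :=
    mul_nonneg ha0 (by linarith)
  rw [abs_lt]
  constructor <;> linarith

lemma sum_visits_Icc_div_sub_integral_lt (hR : 1 ≤ R)
    (hgap : ∀ f, IsKRTest f → krGap n w am a0 ap μ₀ f < 2 ^ (-(R : ℤ)) * ε)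
    (hp : 1 - ε < μ₀.real (A⁰ R)) (ha0 : 0 ≤ a0) (ha0' : a0 ≤ 1)
    (hf : IsKRTest f) :
    (∑ j ∈ visits n w (A⁰ R), f (.inl (w j))) / n
      - a0 * ∫ z, f (.inl z) ∂μ₀ < 2 * ε + 2 ^ (-(R : ℤ)) * (1 + ε) := by
  have hP : (0 : ℝ) < 2 ^ (-(R : ℤ)) := by positivity
  have hu := hf.2 (.inr false)
  have hv := hf.2 (.inr true)
  have hmid : (∑ j ∈ visits n w (A⁰ R), f (.inl (w j))) / n ≤
      1 / n * ∑ j ∈ Finset.Icc 1 n, f (.inl (w j))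
        - #(visits n w (A⁻ R)) / n * (f (.inr false) - 2 ^ (-(R : ℤ)))
        - #(visits n w (A⁺ R)) / n * (f (.inr true) - 2 ^ (-(R : ℤ))) :=
    (div_le_div_of_nonneg_right (hf.sum_visits_Icc_le hR) n.cast_nonneg).trans_eq (by ring)
  have hgf := hgap f hf
  unfold krGap at hgf
  have htails := occupation_estimate (lo := -f (.inr false)) (mid := 0) (hi := -f (.inr true))
    hR hgap (by rwa [abs_neg]) (by norm_num) (by rwa [abs_neg]) (by simpa using hu)
    (by simpa using hv)
  simp only [zero_mul, add_zero] at htails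
  have hvisits : (#(visits n w (A⁻ R)) : ℝ) / n + #(visits n w (A⁺ R)) / n
      ≤ 1 := by
    rw [← add_div]
    exact div_le_one_of_le₀ (by linarith [card_visits_add (n := n) (w := w) hR]) n.cast_nonneg
  have hmass := measureReal_Iic_add_Icc_add_Ici μ₀ hR
  have hlowmass : 0 ≤ a0 * μ₀.real (A⁻ R) * (1 + f (.inr false)) :=
    mul_nonneg (mul_nonneg ha0 measureReal_nonneg) (by linarith [abs_le.1 hu])
  have hhighmass : 0 ≤ a0 * μ₀.real (A⁺ R) * (1 + f (.inr true)) :=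
    mul_nonneg (mul_nonneg ha0 measureReal_nonneg) (by linarith [abs_le.1 hv])
  have htailmass : a0 * (μ₀.real (A⁻ R) + μ₀.real (A⁺ R)) ≤
      μ₀.real (A⁻ R) + μ₀.real (A⁺ R) :=
    mul_le_of_le_one_left (by positivity) ha0'
  have hPvisits : 0 ≤ 2 ^ (-(R : ℤ)) *
      (1 - ((#(visits n w (A⁻ R)) : ℝ) / n + #(visits n w (A⁺ R)) / n)) :=
    mul_nonneg hP.le (by linarith)
  linarith

lemma restricted_mean_sub_integral_le (hR : 1 ≤ R)
    (hgap : ∀ f, IsKRTest f → krGap n w am a0 ap μ₀ f < 2 ^ (-(R : ℤ)) * ε)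
    (hp : 1 - ε < μ₀.real (A⁰ R)) (ha0 : 2 * ε < a0) (ha0' : a0 ≤ 1)
    (hP : (2 : ℝ) ^ (-(R : ℤ)) ≤ ε / 4) (hf : IsKRTest f) :
    1 / (#(visits n w (A⁰ R)) : ℝ) *
        ∑ j ∈ visits n w (A⁰ R), f (.inl (w j))
      - ∫ z, f (.inl z) ∂μ₀ ≤ 5 * ε / a0 := by
  have hε : 0 < ε := by linarith [show (0 : ℝ) < 2 ^ (-(R : ℤ)) by positivity]
  have ha0pos : 0 < a0 := by linarith
  have hfreq := abs_card_visits_Icc_div_sub_lt hR hgap hp ha0pos.le ha0'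
  have hrest := sum_visits_Icc_div_sub_integral_lt hR hgap hp ha0pos.le ha0' hf
  set N : ℝ := (#(visits n w (A⁰ R)) : ℝ)
  set S := ∑ j ∈ visits n w (A⁰ R), f (.inl (w j))
  set I := ∫ z, f (.inl z) ∂μ₀
  have hNn : 0 < N / n := by linarith [abs_lt.1 hfreq]
  obtain ⟨hN, hn⟩ : 0 < N ∧ (0 : ℝ) < n :=
    (div_pos_iff.1 hNn).resolve_right fun h => h.2.not_ge n.cast_nonneg
  have hmean : |S / N| ≤ 1 := by
    rw [abs_div, abs_of_pos hN]
    refine div_le_one_of_le₀ ((Finset.abs_sum_le_sum_abs _ _).trans ?_) hN.le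
    simpa using Finset.sum_le_card_nsmul _ _ 1 fun j _ => hf.2 (.inl (w j))
  have hcross : (a0 - N / n) * (S / N) ≤ 2 * ε := by
    refine (le_abs_self _).trans ?_
    rw [abs_mul, abs_sub_comm]
    nlinarith [abs_nonneg (S / N), abs_nonneg (N / n - a0)]
  have hsplit : 1 / N * S - I = ((a0 - N / n) * (S / N) + (S / n - a0 * I)) / a0 := by
    field_simp
    ring
  rw [hsplit]
  gcongr
  nlinarith

end restricted

theorem restricted_empirical_measure_close_general
    (am a0 ap : ℝ) (ham : 0 ≤ am) (hap : 0 ≤ ap)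
    (hsum : am + a0 + ap = 1)
    (μ₀ : Measure ℤ) [IsProbabilityMeasure μ₀] (ε : ℝ) (hε : 0 < ε)
    (hεa0 : ε < a0 / 2)
    (R : ℕ) (hR : max (RZbar ε) (Rmu μ₀ ε) < R)
    (n : ℕ) (w : ℕ → ℤ)
    (hclose : krDistEmp n w am a0 ap μ₀ < (2 : ℝ) ^ (-(R : ℤ)) * ε) :
    sSup {r : ℝ | ∃ f : Zbar → ℝ,
        (∀ a b : Zbar, |f a - f b| ≤ |phi a - phi b|) ∧ (∀ a, |f a| ≤ 1) ∧
        r = (1 / ((((Finset.Icc 1 n).filter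
              (fun j => -(R : ℤ) + 1 ≤ w j ∧ w j ≤ (R : ℤ) - 1)).card : ℝ))) *
              ∑ j ∈ (Finset.Icc 1 n).filter
                  (fun j => -(R : ℤ) + 1 ≤ w j ∧ w j ≤ (R : ℤ) - 1),
                f (Sum.inl (w j))
            - ∫ z, f (Sum.inl z) ∂μ₀}
      < 6 * ε / a0 := by
  have hRZ : RZbar ε < R := (le_max_left _ _).trans_lt hR
  have hR1 : 1 ≤ R := by unfold RZbar at hRZ; omega
  have hP := two_zpow_neg_le_of_RZbar_lt hε hRZ
  have hp := one_sub_lt_measureReal_Icc μ₀ hε ((le_max_right _ _).trans hR.le)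
  have hgap := fun f (hf : IsKRTest f) => krGap_lt_of_krDistEmp_lt hclose hf
  have ha0 : 0 < a0 := by linarith
  refine (Real.sSup_le ?_ (div_nonneg (by linarith) ha0.le)).trans_lt
    ((div_lt_div_iff_of_pos_right ha0).2 (by linarith : 5 * ε < 6 * ε))
  rintro _ ⟨f, hlip, hbd, rfl⟩
  exact restricted_mean_sub_integral_le hR1 hgap hp (by linarith) (by linarith) hP ⟨hlip, hbd⟩

/-- The restricted empirical measure `ℓ⁰(w)`, normalized on the central region
`A⁰ = ⟦−R+1, R−1⟧`, is `6ε/α₀`-close to `μ₀` in Kantorovich–Rubinstein distance. -/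
theorem restricted_empirical_measure_close
    (am a0 ap : ℝ) (ham : 0 ≤ am) (ha0 : 0 ≤ a0) (hap : 0 ≤ ap)
    (hsum : am + a0 + ap = 1) (ha0' : a0 ≠ 0)
    (μ₀ : Measure ℤ) [IsProbabilityMeasure μ₀] (ε : ℝ) (hε : 0 < ε)
    (hεa0 : ε < a0 / 2)
    (R : ℕ) (hR : max (RZbar ε) (Rmu μ₀ ε) < R)
    (n : ℕ) (hn : 1 ≤ n) (w : ℕ → ℤ) (hw0 : w 1 = 0)
    (hstep : ∀ j, 1 ≤ j → j < n → (w (j + 1) - w j = 1 ∨ w (j + 1) - w j = -1))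
    (hclose : krDistEmp n w am a0 ap μ₀ < (2 : ℝ) ^ (-(R : ℤ)) * ε) :
    sSup {r : ℝ | ∃ f : Zbar → ℝ,
        (∀ a b : Zbar, |f a - f b| ≤ |phi a - phi b|) ∧ (∀ a, |f a| ≤ 1) ∧
        r = (1 / ((((Finset.Icc 1 n).filter
              (fun j => -(R : ℤ) + 1 ≤ w j ∧ w j ≤ (R : ℤ) - 1)).card : ℝ))) *
              ∑ j ∈ (Finset.Icc 1 n).filter
                  (fun j => -(R : ℤ) + 1 ≤ w j ∧ w j ≤ (R : ℤ) - 1),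
                f (Sum.inl (w j))
            - ∫ z, f (Sum.inl z) ∂μ₀}
      < 6 * ε / a0 :=
  restricted_empirical_measure_close_general am a0 ap ham hap hsum μ₀ ε hε hεa0 R hR n w hclose
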